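/- Key inequality in the convergence proof: if φ(fₙ) ↓ φ* > φ(f̂) with φ* = φ(f̂) + δ, D_φ(fₙ;fₙ) = 0, A2′ holds, and θₙ satisfies D_φ(f_{θₙ};fₙ) ≤ ½ inf_θ D_φ(f_θ;fₙ), then D_φ(f_{θₙ} − fₙ; fₙ) ≤ −δ/2. -/

import Mathlib

open Filter Topology Set MeasureTheory

/-! The minimizer `f̂` lies at least `δ` below `f`, so by the subgradient inequality the
directional derivative `D(f̂;f) = D(f̂ - f;f)` is at most `-δ`. Since `D(f̂;f)` is the
`μ̂`-average of the `D(f_θ;f)`, some vertex does at least as well as the average, and the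
chosen vertex `θₙ` achieves half the infimum, hence half of `-δ`. -/

theorem const_le_integral_of_ae_le {Θ : Type*} [MeasurableSpace Θ] {μ : Measure Θ}
    [IsProbabilityMeasure μ] {g : Θ → ℝ} (hg : Integrable g μ) {c : ℝ}
    (hc : ∀ᵐ t ∂μ, c ≤ g t) : c ≤ ∫ t, g t ∂μ := by
  simpa using integral_mono_ae (integrable_const c) hg hc

theorem support_reduction_stmt14_general
    {E : Type*} [NormedAddCommGroup E]
    {Θ : Type*} [MeasurableSpace Θ] (fθ : Θ → E)
    (φ : E → ℝ) (D : E → E → ℝ)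
    (fhat : E) (μhat : Measure Θ) [IsProbabilityMeasure μhat]
    (f : E) (δ : ℝ)
    (hstar : φ fhat + δ ≤ φ f)
    (hzero : D f f = 0)
    -- A2′ applied to f̂ at f
    (hA2 : D fhat f = ∫ t, D (fθ t) f ∂μhat)
    (hDint : Integrable (fun t => D (fθ t) f) μhat)
    -- subgradient inequality (from convexity, A1)
    (hsub : D (fhat - f) f ≤ φ fhat - φ f)
    -- linearity of the derivative (from A2′)
    (hlin : ∀ h : E, D (h - f) f = D h f - D f f)
    (θn : Θ)
    (hθn : ∀ t : Θ, D (fθ θn) f ≤ (1/2) * D (fθ t) f) :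
    D (fθ θn - f) f ≤ -δ / 2 := by
  have hfhat : D fhat f ≤ -δ := by
    have := hlin fhat
    linarith
  have hvertex : 2 * D (fθ θn) f ≤ D fhat f :=
    hA2 ▸ const_le_integral_of_ae_le hDint (ae_of_all _ fun t => by linarith [hθn t])
  rw [hlin, hzero]
  linarith

/-- Key inequality in the convergence proof: if `φ(f) ≥ φ* = φ(f̂) + δ` with
`δ > 0`, `D(f;f) = 0`, A2′ holds for the representation of the minimizer `f̂`,
the subgradient inequality `D(f̂ − f; f) ≤ φ(f̂) − φ(f)` holds, and the vertex
`θₙ` satisfies `D(f_{θₙ};f) ≤ ½ D(f_θ;f)` for all `θ`, then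
`D(f_{θₙ} − f; f) ≤ −δ/2`. -/
theorem support_reduction_stmt14
    {E : Type*} [NormedAddCommGroup E] [NormedSpace ℝ E]
    {Θ : Type*} [MeasurableSpace Θ] (fθ : Θ → E)
    (φ : E → ℝ) (D : E → E → ℝ)
    (fhat : E) (μhat : Measure Θ) [IsProbabilityMeasure μhat]
    (hμint : Integrable (fun t => fθ t) μhat)
    (hrep : fhat = ∫ t, fθ t ∂μhat)
    (f : E) (δ : ℝ) (hδ : 0 < δ)
    (hstar : φ fhat + δ ≤ φ f)
    (hzero : D f f = 0)
    -- A2′ applied to f̂ at f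
    (hA2 : D fhat f = ∫ t, D (fθ t) f ∂μhat)
    (hDint : Integrable (fun t => D (fθ t) f) μhat)
    -- subgradient inequality (from convexity, A1)
    (hsub : D (fhat - f) f ≤ φ fhat - φ f)
    -- linearity of the derivative (from A2′)
    (hlin : ∀ h : E, D (h - f) f = D h f - D f f)
    (θn : Θ)
    (hθn : ∀ t : Θ, D (fθ θn) f ≤ (1/2) * D (fθ t) f) :
    D (fθ θn - f) f ≤ -δ / 2 :=
  support_reduction_stmt14_general fθ φ D fhat μhat f δ hstar hzero hA2 hDint hsub hlin θn hθn
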